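/- arXiv:2404.07771 — 3 statements merged into one kernel-verified Lean document; each statement's English description precedes it below -/
import Mathlib

section
/- If the data distribution is supported on a linear subspace, i.e., x_0 = A z with A ∈ ℝ^{D×d} having orthonormal columns and z ~ P_z on ℝ^d, then the score of the forward process decomposes orthogonally as ∇ log p_t(x) = A ∇ log p_t^{ld}(A^⊤ x) − (1/(1−e^{−t})) (I − A A^⊤) x, where p_t^{ld} is the marginal density of the forward process applied to the latent variable z. -/
/-!
Since `A` is an isometry, `‖y - α A z‖² = ‖Aᵀy - α z‖² + ‖y‖² - ‖Aᵀy‖²`, so the ambient Gaussian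
kernel factors through the latent one:
`p y = C · exp (-(‖y‖² - ‖Aᵀy‖²) / 2h) · p_ld (Aᵀy)` with `h = 1 - e^{-t}`.
Taking logarithms, `log p y = log C - ‖y‖² / 2h + φ (Aᵀy)` with `φ u = ‖u‖² / 2h + log p_ld u`;
the chain rule through `Aᵀ` turns `∇φ` into `A (Aᵀx / h + ∇ log p_ld (Aᵀx))`, and the two
quadratic terms combine to `-(x - AAᵀx) / h`. The analytic input is that a Gaussian mixture is
positive and, by differentiation under the integral sign, differentiable.
-/

open MeasureTheory

noncomputable def gaussKernel' (n : ℕ) (α h : ℝ)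
    (x₀ x : EuclideanSpace ℝ (Fin n)) : ℝ :=
  (Real.sqrt ((2 * Real.pi * h) ^ n))⁻¹ * Real.exp (-‖x - α • x₀‖ ^ 2 / (2 * h))

noncomputable def gaussNormConst (n : ℕ) (h : ℝ) : ℝ :=
  (Real.sqrt ((2 * Real.pi * h) ^ n))⁻¹

lemma gaussNormConst_nonneg (n : ℕ) (h : ℝ) : 0 ≤ gaussNormConst n h := by
  unfold gaussNormConst; positivity

lemma gaussNormConst_pos (n : ℕ) {h : ℝ} (hh : 0 < h) : 0 < gaussNormConst n h := by
  unfold gaussNormConst; positivity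

lemma mul_exp_neg_sq_div_le_sqrt {h : ℝ} (hh : 0 < h) (r : ℝ) :
    r * Real.exp (-r ^ 2 / (2 * h)) ≤ Real.sqrt h := by
  set s := r ^ 2 / (2 * h)
  have hE : Real.exp (-s) ≤ 1 := Real.exp_le_one_iff.2 (neg_nonpos.2 (by positivity))
  have hsE : s * Real.exp (-s) ≤ 1 / 2 := by
    have hle := Real.mul_exp_neg_le_exp_neg_one s
    have hlt : Real.exp (-1) < 1 / 2 := by
      rw [Real.exp_neg, inv_lt_comm₀ (Real.exp_pos 1) (by norm_num)]
      linarith [Real.exp_one_gt_d9]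
    linarith
  have hsq : (r * Real.exp (-s)) ^ 2 ≤ h := calc
    (r * Real.exp (-s)) ^ 2 ≤ r ^ 2 * Real.exp (-s) := by
      rw [mul_pow]; gcongr; nlinarith [Real.exp_pos (-s)]
    _ = 2 * h * (s * Real.exp (-s)) := by simp only [s]; field_simp
    _ ≤ h := by nlinarith
  rw [neg_div]
  exact Real.le_sqrt_of_sq_le hsq

section Kernel

variable {n : ℕ} {α h : ℝ}

lemma gaussKernel'_eq (x₀ x : EuclideanSpace ℝ (Fin n)) :
    gaussKernel' n α h x₀ x = gaussNormConst n h * Real.exp (-‖x - α • x₀‖ ^ 2 / (2 * h)) :=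
  rfl

lemma gaussKernel'_nonneg (x₀ x : EuclideanSpace ℝ (Fin n)) : 0 ≤ gaussKernel' n α h x₀ x :=
  mul_nonneg (gaussNormConst_nonneg n h) (Real.exp_pos _).le

lemma gaussKernel'_pos (hh : 0 < h) (x₀ x : EuclideanSpace ℝ (Fin n)) :
    0 < gaussKernel' n α h x₀ x :=
  mul_pos (gaussNormConst_pos n hh) (Real.exp_pos _)

lemma gaussKernel'_le (hh : 0 ≤ h) (x₀ x : EuclideanSpace ℝ (Fin n)) :
    gaussKernel' n α h x₀ x ≤ gaussNormConst n h := by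
  have hexp : Real.exp (-‖x - α • x₀‖ ^ 2 / (2 * h)) ≤ 1 :=
    Real.exp_le_one_iff.2 (div_nonpos_of_nonpos_of_nonneg (by simp) (by positivity))
  rw [gaussKernel'_eq]
  exact mul_le_of_le_one_right (gaussNormConst_nonneg n h) hexp

lemma continuous_gaussKernel'_left (x : EuclideanSpace ℝ (Fin n)) :
    Continuous fun x₀ => gaussKernel' n α h x₀ x := by
  unfold gaussKernel'; fun_prop

lemma hasFDerivAt_gaussKernel' (x₀ x : EuclideanSpace ℝ (Fin n)) :
    HasFDerivAt (gaussKernel' n α h x₀)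
      ((-h⁻¹ * gaussKernel' n α h x₀ x) • innerSL ℝ (x - α • x₀)) x := by
  have hq := (((hasFDerivAt_id x).sub_const (α • x₀)).norm_sq.const_mul
    (-(2 * h)⁻¹)).exp.const_mul (gaussNormConst n h)
  refine (hq.congr_fderiv ?_).congr_of_eventuallyEq (Filter.Eventually.of_forall fun y => ?_)
  · ext v
    simp only [smul_apply, ContinuousLinearMap.comp_id, smul_eq_mul,
      nsmul_eq_mul, coe_innerSL_apply, gaussKernel'_eq, id]
    ring_nf
  · simp only [gaussKernel'_eq, id]
    ring_nf

lemma norm_fderiv_gaussKernel'_le (hh : 0 < h) (x₀ x : EuclideanSpace ℝ (Fin n)) :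
    ‖(-h⁻¹ * gaussKernel' n α h x₀ x) • innerSL ℝ (x - α • x₀)‖
      ≤ gaussNormConst n h * h⁻¹ * Real.sqrt h := by
  rw [norm_smul, innerSL_apply_norm, norm_mul, norm_neg, Real.norm_of_nonneg (by positivity),
    Real.norm_of_nonneg (gaussKernel'_nonneg x₀ x), gaussKernel'_eq]
  calc h⁻¹ * (gaussNormConst n h * Real.exp (-‖x - α • x₀‖ ^ 2 / (2 * h))) * ‖x - α • x₀‖
      = gaussNormConst n h * h⁻¹ *
          (‖x - α • x₀‖ * Real.exp (-‖x - α • x₀‖ ^ 2 / (2 * h))) := by ring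
    _ ≤ gaussNormConst n h * h⁻¹ * Real.sqrt h := by
      have := gaussNormConst_nonneg n h
      gcongr
      exact mul_exp_neg_sq_div_le_sqrt hh _

variable {μ : Measure (EuclideanSpace ℝ (Fin n))} [IsFiniteMeasure μ]

lemma integrable_gaussKernel'_left (hh : 0 ≤ h) (x : EuclideanSpace ℝ (Fin n)) :
    Integrable (fun x₀ => gaussKernel' n α h x₀ x) μ :=
  (integrable_const (gaussNormConst n h)).mono'
    (continuous_gaussKernel'_left x).aestronglyMeasurable (.of_forall fun x₀ => by
      rw [Real.norm_of_nonneg (gaussKernel'_nonneg x₀ x)]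
      exact gaussKernel'_le hh x₀ x)

lemma integral_gaussKernel'_pos [NeZero μ] (hh : 0 < h) (x : EuclideanSpace ℝ (Fin n)) :
    0 < ∫ x₀, gaussKernel' n α h x₀ x ∂μ := by
  rw [integral_pos_iff_support_of_nonneg (fun x₀ => gaussKernel'_nonneg x₀ x)
    (integrable_gaussKernel'_left hh.le x)]
  have hsupp : Function.support (fun x₀ => gaussKernel' n α h x₀ x) = Set.univ :=
    Set.eq_univ_of_forall fun x₀ => (gaussKernel'_pos hh x₀ x).ne'
  rw [hsupp]
  exact Measure.measure_univ_pos.2 (NeZero.ne μ)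

lemma differentiable_integral_gaussKernel' (hh : 0 < h) :
    Differentiable ℝ fun x => ∫ x₀, gaussKernel' n α h x₀ x ∂μ := by
  intro x
  have hF'_meas : AEStronglyMeasurable
      (fun x₀ => (-h⁻¹ * gaussKernel' n α h x₀ x) • innerSL ℝ (x - α • x₀)) μ := by
    have := continuous_gaussKernel'_left (α := α) (h := h) x
    exact (by fun_prop : Continuous _).aestronglyMeasurable
  exact (hasFDerivAt_integral_of_dominated_of_fderiv_le (Metric.ball_mem_nhds x one_pos)
    (.of_forall fun y => (continuous_gaussKernel'_left y).aestronglyMeasurable)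
    (integrable_gaussKernel'_left hh.le x) hF'_meas
    (.of_forall fun x₀ y _ => norm_fderiv_gaussKernel'_le hh x₀ y) (integrable_const _)
    (.of_forall fun x₀ y _ => hasFDerivAt_gaussKernel' x₀ y)).differentiableAt

end Kernel

section Gradient

variable {F : Type*} [NormedAddCommGroup F] [InnerProductSpace ℝ F] [CompleteSpace F] {f g : F → ℝ} {f' g' x : F}

lemma HasGradientAt.add (hf : HasGradientAt f f' x) (hg : HasGradientAt g g' x) :
    HasGradientAt (fun y => f y + g y) (f' + g') x := by
  rw [hasGradientAt_iff_hasFDerivAt, map_add]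
  exact hf.hasFDerivAt.add hg.hasFDerivAt

lemma HasGradientAt.const_add (c : ℝ) (hf : HasGradientAt f f' x) :
    HasGradientAt (fun y => c + f y) f' x :=
  hf.hasFDerivAt.const_add c

lemma HasGradientAt.const_mul (c : ℝ) (hf : HasGradientAt f f' x) :
    HasGradientAt (fun y => c * f y) (c • f') x := by
  rw [hasGradientAt_iff_hasFDerivAt, map_smul]
  exact hf.hasFDerivAt.const_mul c

lemma hasGradientAt_norm_sq (x : F) : HasGradientAt (fun y => ‖y‖ ^ 2) ((2 : ℝ) • x) x := by
  rw [hasGradientAt_iff_hasFDerivAt, map_smul]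
  exact (hasStrictFDerivAt_norm_sq x).hasFDerivAt.congr_fderiv (by ext; simp)

end Gradient

section FiniteDimensional

variable {E F : Type*} [NormedAddCommGroup E] [InnerProductSpace ℝ E] [FiniteDimensional ℝ E]
  [NormedAddCommGroup F] [InnerProductSpace ℝ F] [FiniteDimensional ℝ F]

lemma HasGradientAt.comp_linearMap {f : E → ℝ} {f' : E} (L : F →ₗ[ℝ] E) {x : F}
    (hf : HasGradientAt f f' (L x)) :
    HasGradientAt (fun y => f (L y)) (LinearMap.adjoint L f') x := by
  rw [hasGradientAt_iff_hasFDerivAt]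
  refine (hf.hasFDerivAt.comp x L.toContinuousLinearMap.hasFDerivAt).congr_fderiv ?_
  ext v
  simp [LinearMap.adjoint_inner_left]

lemma LinearIsometry.norm_sub_map_sq (A : E →ₗᵢ[ℝ] F) (y : F) (w : E) :
    ‖y - A w‖ ^ 2
      = ‖LinearMap.adjoint A.toLinearMap y - w‖ ^ 2
        + (‖y‖ ^ 2 - ‖LinearMap.adjoint A.toLinearMap y‖ ^ 2) := by
  rw [norm_sub_sq_real, norm_sub_sq_real, A.norm_map, LinearMap.adjoint_inner_left,
    LinearIsometry.coe_toLinearMap]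
  ring

end FiniteDimensional

lemma gaussKernel'_map_linearIsometry {D d : ℕ} {α h : ℝ} (hh : 0 < h)
    (A : EuclideanSpace ℝ (Fin d) →ₗᵢ[ℝ] EuclideanSpace ℝ (Fin D))
    (z : EuclideanSpace ℝ (Fin d)) (y : EuclideanSpace ℝ (Fin D)) :
    gaussKernel' D α h (A z) y
      = gaussNormConst D h / gaussNormConst d h
          * Real.exp (-(‖y‖ ^ 2 - ‖LinearMap.adjoint A.toLinearMap y‖ ^ 2) / (2 * h))
          * gaussKernel' d α h z (LinearMap.adjoint A.toLinearMap y) := by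
  have hc := (gaussNormConst_pos d hh).ne'
  rw [gaussKernel'_eq, gaussKernel'_eq, ← A.map_smul, A.norm_sub_map_sq, neg_add, add_div,
    Real.exp_add]
  field_simp

theorem score_decomposition_subspace_general
    (D d : ℕ)
    (A : EuclideanSpace ℝ (Fin d) →ₗᵢ[ℝ] EuclideanSpace ℝ (Fin D))
    (Pz : Measure (EuclideanSpace ℝ (Fin d))) [IsProbabilityMeasure Pz]
    (t : ℝ) (ht : 0 < t)
    (α h : ℝ) (hh : h = 1 - Real.exp (-t))
    -- ambient-space marginal density of the forward process from P_data = A_* P_z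
    (p : EuclideanSpace ℝ (Fin D) → ℝ)
    (hp : ∀ x, p x = ∫ z, gaussKernel' D α h (A z) x ∂Pz)
    -- latent (low-dimensional) marginal density of the forward process from P_z
    (pld : EuclideanSpace ℝ (Fin d) → ℝ)
    (hpld : ∀ u, pld u = ∫ z, gaussKernel' d α h z u ∂Pz)
    (x : EuclideanSpace ℝ (Fin D)) :
    gradient (fun y => Real.log (p y)) x
      = A (gradient (fun u => Real.log (pld u)) (LinearMap.adjoint A.toLinearMap x))
        - (1 / (1 - Real.exp (-t))) •
            (x - A (LinearMap.adjoint A.toLinearMap x)) := by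
  have hh0 : 0 < h := hh ▸ sub_pos.2 (Real.exp_lt_one_iff.2 (neg_lt_zero.2 ht))
  set B := LinearMap.adjoint A.toLinearMap
  set C := gaussNormConst D h / gaussNormConst d h
  have hC : 0 < C := div_pos (gaussNormConst_pos D hh0) (gaussNormConst_pos d hh0)
  have hpld_pos : ∀ u, 0 < pld u := fun u => hpld u ▸ integral_gaussKernel'_pos hh0 u
  have hpld_diff : Differentiable ℝ pld := by
    rw [funext hpld]
    exact differentiable_integral_gaussKernel' hh0
  have hlog_p : (fun y => Real.log (p y)) = fun y => Real.log C
      + (-(2 * h)⁻¹ * ‖y‖ ^ 2 + ((2 * h)⁻¹ * ‖B y‖ ^ 2 + Real.log (pld (B y)))) := by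
    funext y
    rw [hp, funext fun z => gaussKernel'_map_linearIsometry hh0 A z y, integral_const_mul,
      ← hpld, Real.log_mul (by positivity) (hpld_pos _).ne', Real.log_mul hC.ne' (by positivity),
      Real.log_exp]
    ring
  have hlog_pld := ((hpld_diff (B x)).log (hpld_pos (B x)).ne').hasGradientAt
  have hlog_p_grad := (((hasGradientAt_norm_sq x).const_mul (-(2 * h)⁻¹)).add
    ((((hasGradientAt_norm_sq (B x)).const_mul (2 * h)⁻¹).add hlog_pld).comp_linearMap B)).const_add
    (Real.log C)
  rw [hlog_p, hlog_p_grad.gradient, LinearMap.adjoint_adjoint, ← hh]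
  simp only [LinearIsometry.coe_toLinearMap, map_add, map_smul]
  module

theorem score_decomposition_subspace
    (D d : ℕ)
    (A : EuclideanSpace ℝ (Fin d) →ₗᵢ[ℝ] EuclideanSpace ℝ (Fin D))
    (Pz : Measure (EuclideanSpace ℝ (Fin d))) [IsProbabilityMeasure Pz]
    (t : ℝ) (ht : 0 < t)
    (α h : ℝ) (hα : α = Real.exp (-t / 2)) (hh : h = 1 - Real.exp (-t))
    -- ambient-space marginal density of the forward process from P_data = A_* P_z
    (p : EuclideanSpace ℝ (Fin D) → ℝ)
    (hp : ∀ x, p x = ∫ z, gaussKernel' D α h (A z) x ∂Pz)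
    -- latent (low-dimensional) marginal density of the forward process from P_z
    (pld : EuclideanSpace ℝ (Fin d) → ℝ)
    (hpld : ∀ u, pld u = ∫ z, gaussKernel' d α h z u ∂Pz)
    (x : EuclideanSpace ℝ (Fin D)) :
    gradient (fun y => Real.log (p y)) x
      = A (gradient (fun u => Real.log (pld u)) (LinearMap.adjoint A.toLinearMap x))
        - (1 / (1 - Real.exp (-t))) •
            (x - A (LinearMap.adjoint A.toLinearMap x)) :=
  score_decomposition_subspace_general D d A Pz t ht α h hh p hp pld hpld x
end

section
/- The backward transition matrix Q̄_t of the discrete diffusion time reversal, defined by [Q̄_t]_{ij} = ([p_{T−t}]_i/[p_{T−t}]_j)[Q_{T−t}]_{ji} for i ≠ j and [Q̄_t]_{ii} = −Σ_{s≠i}[Q_{T−t}]_{is}([p_{T−t}]_s/[p_{T−t}]_i), has columns summing to zero; moreover p_t^← := p_{T−t} solves dp_t^←/dt = Q̄_t p_t^← whenever p_t solves the forward equation dp_t/dt = Q_t p_t and all entries of p_t are positive. -/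
/-!
Off the diagonal the reversed generator is `Q̄ᵢⱼ = (qᵢ / qⱼ) Qⱼᵢ`, and its diagonal is chosen so
that its columns sum to zero. Multiplying out, the off-diagonal part of
`Q̄ q` collects `qᵢ ∑_{j ≠ i} Qⱼᵢ = -qᵢ Qᵢᵢ` (columns of `Q` sum to zero) and the diagonal part
contributes `-∑_{s ≠ i} Qᵢₛ qₛ`, so `Q̄ q = -Q q`. Since reversing time flips the sign of the
derivative, `p_{T-t}` solves the backward equation.
-/

open Matrix Finset

section ReverseRate

variable {n K : Type*} [Fintype n] [DecidableEq n] [Field K]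

def reverseRate (Q : Matrix n n K) (q : n → K) : Matrix n n K :=
  fun i j => if i = j then -∑ s ∈ univ.erase i, Q i s * (q s / q i) else (q i / q j) * Q j i

theorem sum_reverseRate_col (Q : Matrix n n K) (q : n → K) (j : n) :
    ∑ i, reverseRate Q q i j = 0 := by
  rw [← add_sum_erase _ _ (mem_univ j), reverseRate, if_pos rfl, neg_add_eq_zero]
  refine sum_congr rfl fun i hi => ?_
  rw [reverseRate, if_neg (ne_of_mem_erase hi)]
  ring

theorem reverseRate_mulVec {Q : Matrix n n K} {q : n → K} (hq : ∀ i, q i ≠ 0)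
    (hcols : ∀ j, ∑ i, Q i j = 0) :
    reverseRate Q q *ᵥ q = -(Q *ᵥ q) := by
  funext i
  have hdiag : reverseRate Q q i i * q i = -∑ s ∈ univ.erase i, Q i s * q s := by
    rw [reverseRate, if_pos rfl, neg_mul, sum_mul]
    congr 1
    refine sum_congr rfl fun s _ => ?_
    field_simp [hq i]
  have hoff : ∑ j ∈ univ.erase i, reverseRate Q q i j * q j = q i * -Q i i := by
    have hcol : ∑ j ∈ univ.erase i, Q j i = -Q i i := by
      have hcol_i := hcols i
      rw [← add_sum_erase _ _ (mem_univ i)] at hcol_i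
      exact eq_neg_of_add_eq_zero_right hcol_i
    rw [← hcol, mul_sum]
    refine sum_congr rfl fun j hj => ?_
    rw [reverseRate, if_neg (ne_of_mem_erase hj).symm]
    field_simp [hq j]
  simp only [mulVec, dotProduct, Pi.neg_apply]
  rw [← add_sum_erase _ _ (mem_univ i), hdiag, hoff,
    ← add_sum_erase _ (fun j => Q i j * q j) (mem_univ i)]
  ring

end ReverseRate

theorem discrete_diffusion_time_reversal_general
    (N : ℕ) (T : ℝ)
    (Q : ℝ → Matrix (Fin N) (Fin N) ℝ)
    (p : ℝ → Fin N → ℝ)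
    (hrate_cols : ∀ t j, ∑ i, Q t i j = 0)
    (hpos : ∀ t ∈ Set.Icc (0:ℝ) T, ∀ i, 0 < p t i)
    (hforward : ∀ t ∈ Set.Icc (0:ℝ) T, HasDerivAt p ((Q t).mulVec (p t)) t)
    (Qbar : ℝ → Matrix (Fin N) (Fin N) ℝ)
    (hQbar : ∀ t i j, Qbar t i j =
      if i = j then -∑ s ∈ Finset.univ.erase i, Q (T - t) i s * (p (T - t) s / p (T - t) i)
      else (p (T - t) i / p (T - t) j) * Q (T - t) j i) :
    (∀ t ∈ Set.Icc (0:ℝ) T, ∀ j, ∑ i, Qbar t i j = 0) ∧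
    (∀ t ∈ Set.Ioo (0:ℝ) T,
      HasDerivAt (fun s => p (T - s)) ((Qbar t).mulVec (p (T - t))) t) := by
  have hQbar_eq : ∀ t, Qbar t = reverseRate (Q (T - t)) (p (T - t)) :=
    fun t => funext₂ (hQbar t)
  refine ⟨fun t _ j => hQbar_eq t ▸ sum_reverseRate_col _ _ j, fun t ht => ?_⟩
  have htT : T - t ∈ Set.Icc (0:ℝ) T := ⟨by linarith [ht.2], by linarith [ht.1]⟩
  rw [hQbar_eq, reverseRate_mulVec (fun i => (hpos _ htT i).ne') (hrate_cols _)]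
  exact (hforward _ htT).comp_const_sub T t

theorem discrete_diffusion_time_reversal
    (N : ℕ) (T : ℝ) (hT : 0 < T)
    (Q : ℝ → Matrix (Fin N) (Fin N) ℝ)
    (p : ℝ → Fin N → ℝ)
    (hrate_offdiag : ∀ t i j, i ≠ j → 0 ≤ Q t i j)
    (hrate_cols : ∀ t j, ∑ i, Q t i j = 0)
    (hpos : ∀ t ∈ Set.Icc (0:ℝ) T, ∀ i, 0 < p t i)
    (hprob : ∀ t ∈ Set.Icc (0:ℝ) T, ∑ i, p t i = 1)
    (hforward : ∀ t ∈ Set.Icc (0:ℝ) T, HasDerivAt p ((Q t).mulVec (p t)) t)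
    (Qbar : ℝ → Matrix (Fin N) (Fin N) ℝ)
    (hQbar : ∀ t i j, Qbar t i j =
      if i = j then -∑ s ∈ Finset.univ.erase i, Q (T - t) i s * (p (T - t) s / p (T - t) i)
      else (p (T - t) i / p (T - t) j) * Q (T - t) j i) :
    (∀ t ∈ Set.Icc (0:ℝ) T, ∀ j, ∑ i, Qbar t i j = 0) ∧
    (∀ t ∈ Set.Ioo (0:ℝ) T,
      HasDerivAt (fun s => p (T - s)) ((Qbar t).mulVec (p (T - t))) t) :=
  discrete_diffusion_time_reversal_general N T Q p hrate_cols hpos hforward Qbar hQbar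
end

section
/- Sub-optimality decomposition for reward-conditioned generation: if the reward decomposes as V(x) = g(AA^⊤x) + h((I−AA^⊤)x) with g ≥ 0 on-support and h ≤ 0 off-support, then for any target value a, the sub-optimality SubOpt(a) = a − E_{x∼P̂_a}[V(x)] satisfies SubOpt(a) ≤ E_{P_a}[|g − ĝ|] + |E_{P_a}[g] − E_{P̂_a}[g]| + |E_{P̂_a}[h]|, where P_a is the true conditional distribution given estimated reward ĝ equals a. -/
/-!
STATEMENT 14: Sub-optimality decomposition for reward-conditioned generation.
If V(x) = g(AAᵀx) + h((I−AAᵀ)x) with g ≥ 0 on-support and h ≤ 0 off-support, then for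
any target value a (with E_{P_a}[ĝ(AAᵀx)] = a),
SubOpt(a) = a − E_{P̂_a}[V] ≤ E_{P_a}[|g − ĝ|] + |E_{P_a}[g] − E_{P̂_a}[g]| + |E_{P̂_a}[h]|.
-/

open MeasureTheory Matrix

theorem suboptimality_decomposition
    (D d : ℕ) (A : Matrix (Fin D) (Fin d) ℝ) (hA : Aᵀ * A = 1)
    (g h ghat : (Fin D → ℝ) → ℝ)
    (hg : ∀ u, 0 ≤ g u) (hh : ∀ u, h u ≤ 0)
    (proj : (Fin D → ℝ) → (Fin D → ℝ))
    (hproj : ∀ x, proj x = A.mulVec (Aᵀ.mulVec x))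
    (V : (Fin D → ℝ) → ℝ)
    (hV : ∀ x, V x = g (proj x) + h (x - proj x))
    (Pa Pahat : Measure (Fin D → ℝ))
    [IsProbabilityMeasure Pa] [IsProbabilityMeasure Pahat]
    (a : ℝ)
    (ha : ∫ x, ghat (proj x) ∂Pa = a)
    (hInt₁ : Integrable (fun x => ghat (proj x)) Pa)
    (hInt₂ : Integrable (fun x => g (proj x)) Pa)
    (hInt₃ : Integrable (fun x => g (proj x)) Pahat)
    (hInt₄ : Integrable (fun x => h (x - proj x)) Pahat) :
    a - ∫ x, V x ∂Pahat
      ≤ (∫ x, |g (proj x) - ghat (proj x)| ∂Pa)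
        + |(∫ x, g (proj x) ∂Pa) - ∫ x, g (proj x) ∂Pahat|
        + |∫ x, h (x - proj x) ∂Pahat| := by
  have hVint : ∫ x, V x ∂Pahat = (∫ x, g (proj x) ∂Pahat) + ∫ x, h (x - proj x) ∂Pahat := by
    rw [show (fun x => V x) = fun x => g (proj x) + h (x - proj x) from funext hV]
    exact integral_add hInt₃ hInt₄
  have h1 : a - ∫ x, g (proj x) ∂Pa ≤ ∫ x, |g (proj x) - ghat (proj x)| ∂Pa := by
    rw [← ha, ← integral_sub hInt₁ hInt₂]
    apply integral_mono (hInt₁.sub hInt₂) ((hInt₂.sub hInt₁).abs)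
    intro x; simp only [Pi.sub_apply]; rw [abs_sub_comm]; exact le_abs_self _
  have h2 : (∫ x, g (proj x) ∂Pa) - ∫ x, g (proj x) ∂Pahat
      ≤ |(∫ x, g (proj x) ∂Pa) - ∫ x, g (proj x) ∂Pahat| := le_abs_self _
  have h3 : -(∫ x, h (x - proj x) ∂Pahat) ≤ |∫ x, h (x - proj x) ∂Pahat| := neg_le_abs _
  rw [hVint]
  linarith
end
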